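/- Let U ⊆ ℂ be open and let G : U → ℂ⁴ be holomorphic with componentwise real and imaginary parts g, h : U → ℝ⁴. Assume ⟨⟨G(z),G(z)⟩⟩ ≠ 0, ⟨⟨G'(z),G'(z)⟩⟩ = 0 and G'(z) ≠ 0 for all z ∈ U, so that g is a conformal (minimal) immersion with conjugate minimal immersion h. Write T∘G = g̃ + i·h̃ with g̃, h̃ : U → ℝ⁴. Then for all z ∈ U and v ∈ ℂ one has Dh̃(z)(v) = −Dg̃(z)(i·v) (h̃ is a conjugate of g̃), and ⟨Dg̃(z)(1), Dg̃(z)(i)⟩ = 0 and ‖Dg̃(z)(1)‖ = ‖Dg̃(z)(i)‖ (g̃ is conformal). -/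

import Mathlib

open scoped BigOperators RealInnerProductSpace

/-- The ℂ-bilinear form `⟨⟨Z,W⟩⟩ = ∑ j, Z j * W j` on `ℂ⁴` (no conjugation). -/
noncomputable def bilin {m : ℕ} (Z W : Fin m → ℂ) : ℂ := ∑ j, Z j * W j

/-- The holomorphic inversion `T(Z) = Z / ⟨⟨Z,Z⟩⟩`. -/
noncomputable def Tmap {m : ℕ} (Z : Fin m → ℂ) : Fin m → ℂ := (bilin Z Z)⁻¹ • Z

/-- Componentwise real part of a map into `ℂ^m`, viewed in Euclidean space `ℝ^m`. -/
noncomputable def rePart {m : ℕ} (F : ℂ → Fin m → ℂ) (z : ℂ) :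
    EuclideanSpace ℝ (Fin m) := WithLp.toLp 2 (fun j => (F z j).re)

/-- Componentwise imaginary part of a map into `ℂ^m`, viewed in Euclidean space `ℝ^m`. -/
noncomputable def imPart {m : ℕ} (F : ℂ → Fin m → ℂ) (z : ℂ) :
    EuclideanSpace ℝ (Fin m) := WithLp.toLp 2 (fun j => (F z j).im)

/-!
The inversion `T(Z) = Z / q` with `q = ⟨⟨Z,Z⟩⟩` has differential
`dT_Z(V) = V / q - 2⟨⟨Z,V⟩⟩ Z / q²`, and expanding gives `⟨⟨dT_Z V, dT_Z V⟩⟩ = ⟨⟨V,V⟩⟩ / q²`.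
Hence `T ∘ G` is again a holomorphic curve with null derivative `c`. For any holomorphic
curve `F` with `F' = c`, the real differentials are `v ↦ Re (v c)` and `v ↦ Im (v c)`, so the
Cauchy–Riemann equations say that `Im F` is conjugate to `Re F`; and
`⟨⟨c,c⟩⟩ = ‖Re c‖² - ‖Im c‖² + 2i ⟪Re c, Im c⟫` vanishes exactly when `Re F` is conformal.
-/

open Complex

variable {m : ℕ}

theorem bilin_comm (Z W : Fin m → ℂ) : bilin Z W = bilin W Z := by
  simp only [bilin, mul_comm]

theorem HasDerivAt.bilin {F G : ℂ → Fin m → ℂ} {F' G' : Fin m → ℂ} {z : ℂ}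
    (hF : HasDerivAt F F' z) (hG : HasDerivAt G G' z) :
    HasDerivAt (fun w => _root_.bilin (F w) (G w))
      (_root_.bilin F' (G z) + _root_.bilin (F z) G') z := by
  simp only [_root_.bilin, ← Finset.sum_add_distrib]
  exact HasDerivAt.fun_sum fun j _ => (hasDerivAt_pi.mp hF j).mul (hasDerivAt_pi.mp hG j)

noncomputable def TmapDeriv (Z V : Fin m → ℂ) : Fin m → ℂ :=
  (bilin Z Z)⁻¹ • V - (2 * bilin Z V / bilin Z Z ^ 2) • Z

theorem HasDerivAt.Tmap {F : ℂ → Fin m → ℂ} {F' : Fin m → ℂ} {z : ℂ}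
    (hF : HasDerivAt F F' z) (hne : _root_.bilin (F z) (F z) ≠ 0) :
    HasDerivAt (fun w => _root_.Tmap (F w)) (TmapDeriv (F z) F') z := by
  refine (((hF.bilin hF).fun_inv hne).smul hF).congr_deriv ?_
  rw [TmapDeriv, bilin_comm F' (F z), sub_eq_add_neg, ← neg_smul]
  congr 2
  ring

theorem bilin_smul_sub_smul_self (a b : ℂ) (V Z : Fin m → ℂ) :
    bilin (a • V - b • Z) (a • V - b • Z)
      = a ^ 2 * bilin V V - 2 * a * b * bilin Z V + b ^ 2 * bilin Z Z := by
  simp only [bilin, Finset.mul_sum, ← Finset.sum_add_distrib, ← Finset.sum_sub_distrib,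
    Pi.sub_apply, Pi.smul_apply, smul_eq_mul]
  exact Finset.sum_congr rfl fun j _ => by ring

theorem bilin_TmapDeriv_self {Z : Fin m → ℂ} (hZ : bilin Z Z ≠ 0) (V : Fin m → ℂ) :
    bilin (TmapDeriv Z V) (TmapDeriv Z V) = bilin V V / bilin Z Z ^ 2 := by
  rw [TmapDeriv, bilin_smul_sub_smul_self]
  field_simp
  ring

noncomputable def rePartCLM (m : ℕ) : (Fin m → ℂ) →L[ℝ] EuclideanSpace ℝ (Fin m) :=
  (PiLp.continuousLinearEquiv 2 ℝ fun _ : Fin m => ℝ).symm.toContinuousLinearMap.comp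
    (ContinuousLinearMap.pi fun j => reCLM.comp (ContinuousLinearMap.proj j))

noncomputable def imPartCLM (m : ℕ) : (Fin m → ℂ) →L[ℝ] EuclideanSpace ℝ (Fin m) :=
  (PiLp.continuousLinearEquiv 2 ℝ fun _ : Fin m => ℝ).symm.toContinuousLinearMap.comp
    (ContinuousLinearMap.pi fun j => imCLM.comp (ContinuousLinearMap.proj j))

theorem re_bilin_self (c : Fin m → ℂ) :
    (bilin c c).re = ‖(WithLp.toLp 2 fun j => (c j).re : EuclideanSpace ℝ (Fin m))‖ ^ 2
      - ‖(WithLp.toLp 2 fun j => (c j).im : EuclideanSpace ℝ (Fin m))‖ ^ 2 := by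
  simp only [bilin, re_sum, mul_re, EuclideanSpace.real_norm_sq_eq,
    ← Finset.sum_sub_distrib]
  exact Finset.sum_congr rfl fun j _ => by ring

theorem im_bilin_self (c : Fin m → ℂ) :
    (bilin c c).im = 2 * ⟪(WithLp.toLp 2 fun j => (c j).re : EuclideanSpace ℝ (Fin m)),
      (WithLp.toLp 2 fun j => (c j).im : EuclideanSpace ℝ (Fin m))⟫ := by
  simp only [bilin, im_sum, mul_im, PiLp.inner_apply, Real.inner_apply,
    Finset.mul_sum]
  exact Finset.sum_congr rfl fun j _ => by ring

section HolomorphicCurve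

variable {F : ℂ → Fin m → ℂ} {c : Fin m → ℂ} {z : ℂ}

theorem HasDerivAt.fderiv_rePart_apply (h : HasDerivAt F c z) (v : ℂ) :
    fderiv ℝ (rePart F) z v = WithLp.toLp 2 fun j => (v * c j).re := by
  rw [show rePart F = rePartCLM m ∘ F from rfl,
    ((rePartCLM m).hasFDerivAt.comp z (h.hasFDerivAt.restrictScalars ℝ)).fderiv]
  rfl

theorem HasDerivAt.fderiv_imPart_apply (h : HasDerivAt F c z) (v : ℂ) :
    fderiv ℝ (imPart F) z v = WithLp.toLp 2 fun j => (v * c j).im := by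
  rw [show imPart F = imPartCLM m ∘ F from rfl,
    ((imPartCLM m).hasFDerivAt.comp z (h.hasFDerivAt.restrictScalars ℝ)).fderiv]
  rfl

theorem HasDerivAt.fderiv_imPart_eq_neg_fderiv_rePart_I_mul (h : HasDerivAt F c z) (v : ℂ) :
    fderiv ℝ (imPart F) z v = -fderiv ℝ (rePart F) z (I * v) := by
  rw [h.fderiv_imPart_apply, h.fderiv_rePart_apply]
  ext j
  simp [mul_re, mul_im]

theorem HasDerivAt.rePart_conformal_of_bilin_self_eq_zero (h : HasDerivAt F c z)
    (hc : _root_.bilin c c = 0) :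
    ⟪fderiv ℝ (rePart F) z 1, fderiv ℝ (rePart F) z I⟫ = 0 ∧
      ‖fderiv ℝ (rePart F) z 1‖ = ‖fderiv ℝ (rePart F) z I‖ := by
  have h_one : fderiv ℝ (rePart F) z 1 = WithLp.toLp 2 fun j => (c j).re := by
    simp only [h.fderiv_rePart_apply, one_mul]
  have h_I : fderiv ℝ (rePart F) z I = -WithLp.toLp 2 fun j => (c j).im := by
    rw [h.fderiv_rePart_apply]
    ext j
    simp
  have hre := re_bilin_self c
  have him := im_bilin_self c
  rw [hc, zero_re] at hre
  rw [hc, zero_im] at him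
  rw [h_one, h_I, inner_neg_right, norm_neg, neg_eq_zero]
  exact ⟨by linarith, (sq_eq_sq₀ (norm_nonneg _) (norm_nonneg _)).1 (by linarith)⟩

end HolomorphicCurve

theorem Tmap_comp_conjugate_pair_general (U : Set ℂ)
    (G : ℂ → Fin 4 → ℂ)
    (hG : ∀ z ∈ U, DifferentiableAt ℂ G z)
    (hne : ∀ z ∈ U, bilin (G z) (G z) ≠ 0)
    (hiso : ∀ z ∈ U, bilin (deriv G z) (deriv G z) = 0) :
    ∀ z ∈ U,
      (∀ v : ℂ,
        fderiv ℝ (imPart fun w => Tmap (G w)) z v =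
          - fderiv ℝ (rePart fun w => Tmap (G w)) z (Complex.I * v)) ∧
      (⟪fderiv ℝ (rePart fun w => Tmap (G w)) z 1,
          fderiv ℝ (rePart fun w => Tmap (G w)) z Complex.I⟫ : ℝ) = 0 ∧
      ‖fderiv ℝ (rePart fun w => Tmap (G w)) z 1‖ =
        ‖fderiv ℝ (rePart fun w => Tmap (G w)) z Complex.I‖ := by
  intro z hz
  have hT := (hG z hz).hasDerivAt.Tmap (hne z hz)
  have h_null : bilin (TmapDeriv (G z) (deriv G z)) (TmapDeriv (G z) (deriv G z)) = 0 := by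
    rw [bilin_TmapDeriv_self (hne z hz), hiso z hz, zero_div]
  exact ⟨hT.fderiv_imPart_eq_neg_fderiv_rePart_I_mul, hT.rePart_conformal_of_bilin_self_eq_zero h_null⟩

/-- If `G = g + ih : U → ℂ⁴` is holomorphic with `⟨⟨G,G⟩⟩ ≠ 0`, `⟨⟨G',G'⟩⟩ = 0` and
`G' ≠ 0` on `U` (so `g` is a conformal minimal immersion with conjugate `h`), and
`T∘G = g̃ + i·h̃`, then `h̃` is a conjugate of `g̃` (`Dh̃(z)(v) = −Dg̃(z)(i·v)`) and `g̃`
is conformal (`⟨Dg̃(z)(1),Dg̃(z)(i)⟩ = 0` and `‖Dg̃(z)(1)‖ = ‖Dg̃(z)(i)‖`). -/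
theorem Tmap_comp_conjugate_pair (U : Set ℂ) (hU : IsOpen U)
    (G : ℂ → Fin 4 → ℂ)
    (hG : ∀ z ∈ U, DifferentiableAt ℂ G z)
    (hne : ∀ z ∈ U, bilin (G z) (G z) ≠ 0)
    (hiso : ∀ z ∈ U, bilin (deriv G z) (deriv G z) = 0)
    (himm : ∀ z ∈ U, deriv G z ≠ 0) :
    ∀ z ∈ U,
      (∀ v : ℂ,
        fderiv ℝ (imPart fun w => Tmap (G w)) z v =
          - fderiv ℝ (rePart fun w => Tmap (G w)) z (Complex.I * v)) ∧
      (⟪fderiv ℝ (rePart fun w => Tmap (G w)) z 1,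
          fderiv ℝ (rePart fun w => Tmap (G w)) z Complex.I⟫ : ℝ) = 0 ∧
      ‖fderiv ℝ (rePart fun w => Tmap (G w)) z 1‖ =
        ‖fderiv ℝ (rePart fun w => Tmap (G w)) z Complex.I‖ :=
  Tmap_comp_conjugate_pair_general U G hG hne hiso
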